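/- The global function f_{S^r} of the sand automaton S^r is not surjective, not F-surjective, and not P-surjective: there is a finite configuration with no preimage at all under f_{S^r}, and a periodic configuration with no periodic preimage under f_{S^r}. -/

import Mathlib

/-- The extended integers `ℤ ∪ {-∞, +∞}`. -/
abbrev EZ : Type := WithBot (WithTop ℤ)

/-- Embedding of `ℤ` into the extended integers. -/
def finVal (n : ℤ) : EZ := ((n : WithTop ℤ) : EZ)

/-- The integer value of a finite extended integer (`0` on `±∞`). -/
def valZ (x : EZ) : ℤ := WithBot.recBotCoe 0 (fun y => WithTop.recTopCoe 0 id y) x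

/-- The measuring device `β_l^m`. -/
noncomputable def beta (l : ℕ) (m : ℤ) (n : EZ) : EZ :=
  if finVal (m + (l : ℤ)) < n then ⊤
  else if n < finVal (m - (l : ℤ)) then ⊥
  else WithBot.map (WithTop.map (fun k => k - m)) n

/-- Reference height: the value of `x` if finite, `0` if `x = ±∞`. -/
def refH (x : EZ) : ℤ := if x = ⊥ ∨ x = ⊤ then 0 else valZ x

/-- One-dimensional sandpile configurations. -/
abbrev Config : Type := ℤ → EZ

/-- The neighborhood sequence `d_r^i(c)`: the `2r`-tuple of measured differences. -/
noncomputable def nbhd (r : ℕ) (c : Config) (i : ℤ) : Fin (2 * r) → EZ :=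
  fun j => beta r (refH (c i))
    (c (i + (if (j : ℕ) < r then ((j : ℕ) : ℤ) - (r : ℤ) else ((j : ℕ) : ℤ) - (r : ℤ) + 1)))

/-- The global function of the sand automaton of radius `r` with local rule `lam`. -/
noncomputable def globalF (r : ℕ) (lam : (Fin (2 * r) → EZ) → ℤ) (c : Config) : Config :=
  fun i => if c i = ⊥ ∨ c i = ⊤ then c i
    else finVal (valZ (c i) + lam (nbhd r c i))

/-- Finite configurations. -/
def FiniteConf (c : Config) : Prop := ∃ k : ℕ, ∀ i : ℤ, (k : ℤ) ≤ |i| → c i = finVal 0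

/-- Periodic configurations. -/
def PeriodicConf (c : Config) : Prop := ∃ p : ℤ, p ≠ 0 ∧ ∀ i : ℤ, c (i + p) = c i


/-- The local rule of the sand automaton `S^r`:
`λ_{S^r}(x,y) = -1` if `x = +∞ ∧ y ≠ -∞`, `+1` if `x ≠ +∞ ∧ y = -∞`, `0` otherwise. -/
def lamSr (v : Fin 2 → EZ) : ℤ :=
  if v 0 = ⊤ ∧ v 1 ≠ ⊥ then -1
  else if v 0 ≠ ⊤ ∧ v 1 = ⊥ then 1
  else 0

/-! A grain of height `3` on flat ground of height `0` has no preimage. Every preimage cell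
lies within one unit of its image, so the grain came from height `2` or `3`. Height `3` would need
a right neighbour of height `≥ 2`; so it was at height `2` and rose, which needs a right neighbour
of height `≤ 0`. That neighbour, more than one below its left neighbour and not more than one
above its right one, falls by one, so it cannot end at height `0`. -/

lemma finVal_injective : Function.Injective finVal := fun _ _ h => by simpa [finVal] using h

lemma finVal_ne_bot (n : ℤ) : finVal n ≠ ⊥ := by simp [finVal]

lemma finVal_ne_top (n : ℤ) : finVal n ≠ ⊤ := by simp [finVal]

lemma exists_eq_finVal {x : EZ} (hbot : x ≠ ⊥) (htop : x ≠ ⊤) : ∃ n, x = finVal n := by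
  induction x using WithBot.recBotCoe with
  | bot => exact absurd rfl hbot
  | coe y =>
    induction y using WithTop.recTopCoe with
    | top => exact absurd rfl htop
    | coe n => exact ⟨n, rfl⟩

lemma refH_finVal (n : ℤ) : refH (finVal n) = n := by
  simp [refH, valZ, finVal]

lemma beta_finVal (l : ℕ) (m a : ℤ) :
    beta l m (finVal a) =
      if m + l < a then ⊤ else if a < m - l then ⊥ else finVal (a - m) := by
  simp only [beta, finVal, WithBot.coe_lt_coe, WithTop.coe_lt_coe]
  rfl

lemma globalF_of_finVal (r : ℕ) (lam : (Fin (2 * r) → EZ) → ℤ) {c : Config} {i n : ℤ}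
    (h : c i = finVal n) : globalF r lam c i = finVal (n + lam (nbhd r c i)) := by
  simp [globalF, h, valZ, finVal]

lemma exists_finVal_of_globalF_eq_finVal {r : ℕ} {lam : (Fin (2 * r) → EZ) → ℤ}
    (hlam : ∀ v, |lam v| ≤ r) {c : Config} {i t : ℤ} (h : globalF r lam c i = finVal t) :
    ∃ n, c i = finVal n ∧ |n - t| ≤ r := by
  by_cases hinf : c i = ⊥ ∨ c i = ⊤
  · rw [globalF, if_pos hinf] at h
    rcases hinf with hinf | hinf <;> rw [hinf] at h
    exacts [absurd h.symm (finVal_ne_bot t), absurd h.symm (finVal_ne_top t)]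
  · push Not at hinf
    obtain ⟨n, hn⟩ := exists_eq_finVal hinf.1 hinf.2
    rw [globalF_of_finVal r lam hn] at h
    refine ⟨n, hn, ?_⟩
    rw [← finVal_injective h, sub_add_cancel_left, abs_neg]
    exact hlam _

lemma abs_lamSr_le_one (v : Fin 2 → EZ) : |lamSr v| ≤ 1 := by
  unfold lamSr
  split_ifs <;> simp

/-- The rule of `S^r` on a cell of height `m` between neighbours of heights `a` and `b`. -/
def srStep (a m b : ℤ) : ℤ :=
  if m + 1 < a ∧ m - 1 ≤ b then -1 else if a ≤ m + 1 ∧ b < m - 1 then 1 else 0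

lemma lamSr_nbhd_of_finVal {c : Config} {i a m b : ℤ} (ha : c (i - 1) = finVal a)
    (hm : c i = finVal m) (hb : c (i + 1) = finVal b) :
    lamSr (nbhd 1 c i) = srStep a m b := by
  have hleft : nbhd 1 c i 0 = beta 1 m (finVal a) := by
    simp [nbhd, hm, refH_finVal, ← ha, sub_eq_add_neg]
  have hright : nbhd 1 c i 1 = beta 1 m (finVal b) := by
    simp [nbhd, hm, refH_finVal, ← hb]
  simp only [lamSr, srStep, hleft, hright, beta_finVal, Nat.cast_one]
  split_ifs <;> simp_all [finVal_ne_bot, finVal_ne_top] <;> omega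

lemma globalF_Sr_of_finVal {c : Config} {i a m b : ℤ} (ha : c (i - 1) = finVal a)
    (hm : c i = finVal m) (hb : c (i + 1) = finVal b) :
    globalF 1 lamSr c i = finVal (m + srStep a m b) := by
  rw [globalF_of_finVal 1 lamSr hm, lamSr_nbhd_of_finVal ha hm hb]

theorem globalF_Sr_orphan_pattern (c : Config) (i h : ℤ) :
    ¬ (globalF 1 lamSr c (i - 1) = finVal h ∧ globalF 1 lamSr c i = finVal (h + 3) ∧
      globalF 1 lamSr c (i + 1) = finVal h ∧ globalF 1 lamSr c (i + 2) = finVal h) := by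
  rintro ⟨hl, hi, hr, hrr⟩
  obtain ⟨a, ha, ha'⟩ := exists_finVal_of_globalF_eq_finVal abs_lamSr_le_one hl
  obtain ⟨m, hm, hm'⟩ := exists_finVal_of_globalF_eq_finVal abs_lamSr_le_one hi
  obtain ⟨b, hb, hb'⟩ := exists_finVal_of_globalF_eq_finVal abs_lamSr_le_one hr
  obtain ⟨d, hd, hd'⟩ := exists_finVal_of_globalF_eq_finVal abs_lamSr_le_one hrr
  have hstep_i := finVal_injective <|
    (globalF_Sr_of_finVal (by rwa [sub_eq_add_neg]) hm hb).symm.trans hi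
  have hstep_r := finVal_injective <|
    (globalF_Sr_of_finVal (by rwa [add_sub_cancel_right]) hb
      (by rwa [add_assoc, one_add_one_eq_two])).symm.trans hr
  simp only [srStep] at hstep_i hstep_r
  rw [abs_le] at ha' hm' hb' hd'
  split_ifs at hstep_i hstep_r <;> omega

theorem globalF_Sr_ne_of_pattern {e : Config} (hl : e (-1) = finVal 0) (hi : e 0 = finVal 3)
    (hr : e 1 = finVal 0) (hrr : e 2 = finVal 0) (c : Config) : globalF 1 lamSr c ≠ e := by
  rintro rfl
  exact globalF_Sr_orphan_pattern c 0 0 ⟨hl, hi, hr, hrr⟩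

def singleGrain : Config := fun i => if i = 0 then finVal 3 else finVal 0

def periodicGrains : Config := fun i => if i % 4 = 0 then finVal 3 else finVal 0

lemma finiteConf_singleGrain : FiniteConf singleGrain :=
  ⟨1, fun i hi => if_neg (by rintro rfl; simp at hi)⟩

lemma periodicConf_periodicGrains : PeriodicConf periodicGrains :=
  ⟨4, by norm_num, fun i => by simp only [periodicGrains, Int.add_emod_right]⟩

lemma globalF_Sr_ne_singleGrain (c : Config) : globalF 1 lamSr c ≠ singleGrain :=
  globalF_Sr_ne_of_pattern rfl rfl rfl rfl c

lemma globalF_Sr_ne_periodicGrains (c : Config) : globalF 1 lamSr c ≠ periodicGrains :=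
  globalF_Sr_ne_of_pattern rfl rfl rfl rfl c

/-- `f_{S^r}` is not surjective, not `F`-surjective and not `P`-surjective: there is
a finite configuration with no preimage at all under `f_{S^r}`, and a periodic
configuration with no periodic preimage under `f_{S^r}`. -/
theorem Sr_not_surjective :
    ¬ Function.Surjective (globalF 1 lamSr) ∧
    ¬ (∀ c : Config, FiniteConf c → ∃ c', FiniteConf c' ∧ globalF 1 lamSr c' = c) ∧
    ¬ (∀ c : Config, PeriodicConf c → ∃ c', PeriodicConf c' ∧ globalF 1 lamSr c' = c) ∧
    (∃ c : Config, FiniteConf c ∧ ∀ c' : Config, globalF 1 lamSr c' ≠ c) ∧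
    (∃ c : Config, PeriodicConf c ∧ ∀ c' : Config, PeriodicConf c' → globalF 1 lamSr c' ≠ c) := by
  refine ⟨fun hsurj => ?_, fun hF => ?_, fun hP => ?_,
    ⟨singleGrain, finiteConf_singleGrain, globalF_Sr_ne_singleGrain⟩,
    ⟨periodicGrains, periodicConf_periodicGrains, fun c _ => globalF_Sr_ne_periodicGrains c⟩⟩
  · obtain ⟨c, hc⟩ := hsurj singleGrain
    exact globalF_Sr_ne_singleGrain c hc
  · obtain ⟨c, -, hc⟩ := hF singleGrain finiteConf_singleGrain
    exact globalF_Sr_ne_singleGrain c hc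
  · obtain ⟨c, -, hc⟩ := hP periodicGrains periodicConf_periodicGrains
    exact globalF_Sr_ne_periodicGrains c hc
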